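/- Let A be a weakly-connected combination matrix and W = T_SR(I − T_RR)^{-1}. Then every column of W sums to one, i.e. 1ᵀ_{N_gS} W = 1ᵀ_{N_gR}. -/

import Mathlib

open Matrix Filter

noncomputable section

/-- The set of agents of a network made of `S + R` sub-networks of sizes `Nsz b`:
an agent is a pair of a sub-network index and an index within that sub-network. -/
abbrev Agent (S R : ℕ) (Nsz : Fin (S + R) → ℕ) := (b : Fin (S + R)) × Fin (Nsz b)

/-- The `b`-th diagonal block of a combination matrix. -/
def diagBlock {S R : ℕ} {Nsz : Fin (S + R) → ℕ}
    (A : Matrix (Agent S R Nsz) (Agent S R Nsz) ℝ) (b : Fin (S + R)) :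
    Matrix (Fin (Nsz b)) (Fin (Nsz b)) ℝ :=
  Matrix.of fun i j => A ⟨b, i⟩ ⟨b, j⟩

/-- Agents belonging to the sending group `S` (the first `S` sub-networks). -/
abbrev SIdx (S R : ℕ) (Nsz : Fin (S + R) → ℕ) := {x : Agent S R Nsz // x.1.val < S}

/-- Agents belonging to the receiving group `R` (the last `R` sub-networks). -/
abbrev RIdx (S R : ℕ) (Nsz : Fin (S + R) → ℕ) := {x : Agent S R Nsz // S ≤ x.1.val}

/-- The block `T_SR` of a combination matrix (weights from `S`-agents to `R`-agents). -/
def TSR {S R : ℕ} {Nsz : Fin (S + R) → ℕ}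
    (A : Matrix (Agent S R Nsz) (Agent S R Nsz) ℝ) :
    Matrix (SIdx S R Nsz) (RIdx S R Nsz) ℝ :=
  Matrix.of fun x y => A x.1 y.1

/-- The block `T_RR` of a combination matrix (weights internal to the `R`-group). -/
def TRR {S R : ℕ} {Nsz : Fin (S + R) → ℕ}
    (A : Matrix (Agent S R Nsz) (Agent S R Nsz) ℝ) :
    Matrix (RIdx S R Nsz) (RIdx S R Nsz) ℝ :=
  Matrix.of fun x y => A x.1 y.1

/-- The matrix `W = T_SR (I - T_RR)⁻¹`. -/
def Wmat {S R : ℕ} {Nsz : Fin (S + R) → ℕ}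
    (A : Matrix (Agent S R Nsz) (Agent S R Nsz) ℝ) :
    Matrix (SIdx S R Nsz) (RIdx S R Nsz) ℝ :=
  TSR A * (1 - TRR A)⁻¹

/-- A "weakly-connected combination matrix": a left-stochastic nonnegative matrix, block
upper-triangular, whose first `S` diagonal blocks are primitive (some power is entrywise
positive) and whose last `R` diagonal blocks are irreducible with all column sums at most
one and at least one column sum strictly less than one (the column-sum conditions on the
`R`-blocks follow from left-stochasticity except for the strict one, which is stated). -/
structure IsWeaklyConnected {S R : ℕ} {Nsz : Fin (S + R) → ℕ}
    (A : Matrix (Agent S R Nsz) (Agent S R Nsz) ℝ) : Prop where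
  S_pos : 1 ≤ S
  R_pos : 1 ≤ R
  Nsz_pos : ∀ b, 1 ≤ Nsz b
  nonneg : ∀ x y, 0 ≤ A x y
  colsum : ∀ y, ∑ x, A x y = 1
  SS_blockdiag : ∀ x y : Agent S R Nsz, y.1.val < S → x.1 ≠ y.1 → A x y = 0
  blockUpper : ∀ x y : Agent S R Nsz, y.1.val < x.1.val → A x y = 0
  primitive : ∀ b : Fin (S + R), b.val < S →
    ∃ m : ℕ, 1 ≤ m ∧ ∀ i j, 0 < ((diagBlock A b) ^ m) i j
  irreducible : ∀ b : Fin (S + R), S ≤ b.val →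
    ∀ i j, ∃ m : ℕ, 1 ≤ m ∧ 0 < ((diagBlock A b) ^ m) i j
  colsum_lt : ∀ b : Fin (S + R), S ≤ b.val → ∃ j, ∑ i, diagBlock A b i j < 1

/-- `p` is the family of Perron eigenvectors of the first `S` diagonal blocks. -/
def IsPerronFamily {S R : ℕ} {Nsz : Fin (S + R) → ℕ}
    (A : Matrix (Agent S R Nsz) (Agent S R Nsz) ℝ)
    (p : (b : Fin (S + R)) → Fin (Nsz b) → ℝ) : Prop :=
  ∀ b : Fin (S + R), b.val < S →
    (∀ i, 0 < p b i) ∧ (∑ i, p b i = 1) ∧ (diagBlock A b).mulVec (p b) = p b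

end

/-! Summing the columns of the left-stochastic matrix `A` over the rows gives
`1ᵀ T_SR + 1ᵀ T_RR = 1ᵀ`, i.e. `1ᵀ T_SR = 1ᵀ (I - T_RR)`, so `1ᵀ W = 1ᵀ` as soon as `I - T_RR`
is invertible.

For invertibility, let `T_RR v = v`. Then `|v| ≤ T_RR |v|`, and since the columns of `T_RR`
sum to at most one, `|v|` is a fixed vector as well. Going through the `R`-blocks from the last
one down, block upper-triangularity makes the restriction of `|v|` to a block a nonnegative
fixed vector of the irreducible diagonal block; a deficient column of that block forces a zero
entry, which irreducibility spreads over the whole block. -/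

open Finset

namespace Matrix

theorem sum_mulVec_apply {α m n : Type*} [NonUnitalNonAssocSemiring α] [Fintype m] [Fintype n]
    (B : Matrix m n α) (u : n → α) : ∑ i, (B *ᵥ u) i = ∑ j, (∑ i, B i j) * u j := by
  simp only [mulVec, dotProduct, sum_mul]
  exact sum_comm

variable {α n : Type*} [CommRing α] [LinearOrder α] [IsStrictOrderedRing α] [Fintype n]
  {B : Matrix n n α} {u : n → α}

theorem mulVec_eq_self_and_apply_eq_zero_of_le_mulVec (hcol : ∀ j, ∑ i, B i j ≤ 1) (hu : 0 ≤ u)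
    (hle : u ≤ B *ᵥ u) : B *ᵥ u = u ∧ ∀ j, ∑ i, B i j < 1 → u j = 0 := by
  have hgain : ∑ i, ((B *ᵥ u) i - u i) = -∑ j, (1 - ∑ i, B i j) * u j := by
    simp only [sum_sub_distrib, sum_mulVec_apply, sub_mul, one_mul]
    ring
  have hgain_nonneg : ∀ i, 0 ≤ (B *ᵥ u) i - u i := fun i => sub_nonneg.2 (hle i)
  have hloss_nonneg : ∀ j, 0 ≤ (1 - ∑ i, B i j) * u j :=
    fun j => mul_nonneg (sub_nonneg.2 (hcol j)) (hu j)
  have hgain_zero : ∑ i, ((B *ᵥ u) i - u i) = 0 :=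
    le_antisymm (hgain ▸ neg_nonpos.2 (sum_nonneg fun j _ => hloss_nonneg j))
      (sum_nonneg fun i _ => hgain_nonneg i)
  have hloss_zero : ∑ j, (1 - ∑ i, B i j) * u j = 0 := by linarith
  refine ⟨funext fun i => ?_, fun j hj => ?_⟩
  · have := (sum_eq_zero_iff_of_nonneg fun i _ => hgain_nonneg i).1 hgain_zero i (mem_univ i)
    linarith
  · have := (sum_eq_zero_iff_of_nonneg fun j _ => hloss_nonneg j).1 hloss_zero j (mem_univ j)
    exact (mul_eq_zero.1 this).resolve_left (by linarith)

theorem abs_mulVec_le_mulVec_abs (hB : ∀ i j, 0 ≤ B i j) (v : n → α) :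
    |B *ᵥ v| ≤ B *ᵥ |v| := fun i =>
  calc |(B *ᵥ v) i| ≤ ∑ j, |B i j * v j| := abs_sum_le_sum_abs _ _
    _ = (B *ᵥ |v|) i := sum_congr rfl fun j _ => by
      rw [abs_mul, abs_of_nonneg (hB i j)]
      rfl

theorem IsIrreducible.eq_zero_of_mulVec_eq_self [DecidableEq n] (hB : B.IsIrreducible)
    (hcol : ∀ j, ∑ i, B i j ≤ 1) (hdef : ∃ j, ∑ i, B i j < 1) (hu : 0 ≤ u)
    (hfix : B *ᵥ u = u) : u = 0 := by
  obtain ⟨j₀, hj₀⟩ := hdef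
  have hu₀ : u j₀ = 0 := (mulVec_eq_self_and_apply_eq_zero_of_le_mulVec hcol hu hfix.ge).2 j₀ hj₀
  have hpow : ∀ m, (B ^ m) *ᵥ u = u := by
    intro m
    induction m with
    | zero => simp
    | succ m ih => rw [pow_succ, ← mulVec_mulVec, hfix, ih]
  funext k
  obtain ⟨m, -, hpos⟩ := (isIrreducible_iff_exists_pow_pos hB.nonneg).1 hB j₀ k
  have hterms : ∑ l, (B ^ m) j₀ l * u l = 0 := hu₀ ▸ congrFun (hpow m) j₀
  have := (sum_eq_zero_iff_of_nonneg fun l _ =>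
    mul_nonneg (pow_apply_nonneg hB.nonneg m j₀ l) (hu l)).1 hterms k (mem_univ k)
  exact (mul_eq_zero.1 this).resolve_left hpos.ne'

end Matrix

section WeaklyConnected

variable {S R : ℕ} {Nsz : Fin (S + R) → ℕ} {A : Matrix (Agent S R Nsz) (Agent S R Nsz) ℝ}

theorem sum_SIdx_add_sum_RIdx {M : Type*} [AddCommMonoid M] (f : Agent S R Nsz → M) :
    ∑ x : SIdx S R Nsz, f x.1 + ∑ x : RIdx S R Nsz, f x.1 = ∑ x, f x := by
  rw [← Fintype.sum_subtype_add_sum_subtype (fun x : Agent S R Nsz => x.1.val < S) f]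
  congr 1
  exact Fintype.sum_equiv (Equiv.subtypeEquivRight fun _ => not_lt.symm) _ _ fun _ => rfl

namespace IsWeaklyConnected

theorem one_vecMul_TSR (hA : IsWeaklyConnected A) : 1 ᵥ* TSR A = 1 ᵥ* (1 - TRR A) := by
  funext y
  have h := hA.colsum y.1
  rw [← sum_SIdx_add_sum_RIdx] at h
  simp only [vecMul_apply_eq_sum, Pi.one_apply, one_mul, Matrix.sub_apply, sum_sub_distrib,
    one_apply, sum_ite_eq', mem_univ, if_true, TSR, TRR, of_apply]
  linarith

theorem sum_TRR_le_one (hA : IsWeaklyConnected A) (y : RIdx S R Nsz) :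
    ∑ x, TRR A x y ≤ 1 := by
  have h := hA.colsum y.1
  rw [← sum_SIdx_add_sum_RIdx] at h
  have : 0 ≤ ∑ x : SIdx S R Nsz, A x.1 y.1 := sum_nonneg fun _ _ => hA.nonneg _ _
  simp only [TRR, of_apply]
  linarith

theorem sum_diagBlock_le_one (hA : IsWeaklyConnected A) (b : Fin (S + R)) (j : Fin (Nsz b)) :
    ∑ i, diagBlock A b i j ≤ 1 :=
  calc ∑ i, diagBlock A b i j
      = ∑ x ∈ univ.map ⟨Sigma.mk b, sigma_mk_injective⟩, A x ⟨b, j⟩ := by rw [sum_map]; rfl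
    _ ≤ ∑ x, A x ⟨b, j⟩ := sum_le_univ_sum_of_nonneg fun _ => hA.nonneg _ _
    _ = 1 := hA.colsum _

theorem isIrreducible_diagBlock (hA : IsWeaklyConnected A) {b : Fin (S + R)} (hb : S ≤ b.val) :
    (diagBlock A b).IsIrreducible :=
  (isIrreducible_iff_exists_pow_pos fun _ _ => hA.nonneg _ _).2 fun i j =>
    let ⟨m, hm, hpos⟩ := hA.irreducible b hb i j
    ⟨m, hm, hpos⟩

theorem diagBlock_mulVec_restrict_eq (hA : IsWeaklyConnected A) {u : RIdx S R Nsz → ℝ}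
    (hfix : TRR A *ᵥ u = u) {b : Fin (S + R)} (hb : S ≤ b.val)
    (hlater : ∀ y : RIdx S R Nsz, b < y.1.1 → u y = 0) :
    diagBlock A b *ᵥ (fun i => u ⟨⟨b, i⟩, hb⟩) = fun i => u ⟨⟨b, i⟩, hb⟩ := by
  funext i
  conv_rhs => rw [← hfix]
  refine Fintype.sum_of_injective (fun j : Fin (Nsz b) => (⟨⟨b, j⟩, hb⟩ : RIdx S R Nsz)) ?_
    _ _ ?_ fun _ => rfl
  · intro j j' h
    simpa using h
  · rintro ⟨⟨b', j⟩, hb'⟩ hy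
    rcases lt_trichotomy b' b with h | rfl | h
    · exact mul_eq_zero_of_left (hA.blockUpper ⟨b, i⟩ ⟨b', j⟩ h) _
    · exact absurd ⟨j, rfl⟩ hy
    · rw [hlater _ h, mul_zero]

theorem eq_zero_of_TRR_mulVec_eq_self (hA : IsWeaklyConnected A) {u : RIdx S R Nsz → ℝ}
    (hu : 0 ≤ u) (hfix : TRR A *ᵥ u = u) : u = 0 := by
  suffices h : ∀ b : Fin (S + R), ∀ hb : S ≤ b.val, ∀ i, u ⟨⟨b, i⟩, hb⟩ = 0 by
    funext ⟨⟨b, i⟩, hb⟩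
    exact h b hb i
  intro b
  induction b using WellFoundedGT.induction with
  | _ b ih =>
    intro hb
    have hlater : ∀ y : RIdx S R Nsz, b < y.1.1 → u y = 0 :=
      fun ⟨⟨b', j⟩, hb'⟩ h => ih b' h hb' j
    exact congrFun ((hA.isIrreducible_diagBlock hb).eq_zero_of_mulVec_eq_self
      (hA.sum_diagBlock_le_one b) (hA.colsum_lt b hb) (fun _ => hu _)
      (hA.diagBlock_mulVec_restrict_eq hfix hb hlater))

theorem isUnit_det_one_sub_TRR (hA : IsWeaklyConnected A) : IsUnit (1 - TRR A).det := by
  refine isUnit_iff_ne_zero.2 fun hdet => ?_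
  obtain ⟨v, hv, hker⟩ := exists_mulVec_eq_zero_iff.2 hdet
  have hfix : TRR A *ᵥ v = v := by
    rwa [sub_mulVec, one_mulVec, sub_eq_zero, eq_comm] at hker
  have hle : |v| ≤ TRR A *ᵥ |v| := by
    simpa only [hfix] using abs_mulVec_le_mulVec_abs (B := TRR A) (fun _ _ => hA.nonneg _ _) v
  have habs := hA.eq_zero_of_TRR_mulVec_eq_self (abs_nonneg v)
    (mulVec_eq_self_and_apply_eq_zero_of_le_mulVec hA.sum_TRR_le_one (abs_nonneg v) hle).1
  exact hv (funext fun x => abs_eq_zero.1 (by simpa using congrFun habs x))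

end IsWeaklyConnected

end WeaklyConnected

/-- **Columns of `W` sum to one.** For a weakly-connected combination matrix `A` with
`W = T_SR (I − T_RR)⁻¹`, every column of `W` sums to one: `1ᵀ_{N_gS} W = 1ᵀ_{N_gR}`. -/
theorem Wmat_colsum_one
    (S R : ℕ) (Nsz : Fin (S + R) → ℕ)
    (A : Matrix (Agent S R Nsz) (Agent S R Nsz) ℝ)
    (hA : IsWeaklyConnected A) :
    ∀ y : RIdx S R Nsz, ∑ x : SIdx S R Nsz, Wmat A x y = 1 := by
  have hW : 1 ᵥ* Wmat A = 1 := by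
    rw [Wmat, ← vecMul_vecMul, hA.one_vecMul_TSR, vecMul_vecMul,
      mul_nonsing_inv _ hA.isUnit_det_one_sub_TRR, vecMul_one]
  intro y
  simpa only [vecMul_apply_eq_sum, Pi.one_apply, one_mul] using congrFun hW y
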